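/- Let φ be a 3SAT instance with N variables and m clauses, each clause a disjunction of exactly three literals, and let α = 2N + 4m + 1. Construct the 4-uniform hypergraph H(φ) as follows. Its vertices are s_1, …, s_α, t_1, …, t_α, a node for each literal x_i and ¬x_i (i = 1, …, N), and nodes z_j, z_j' for each clause j = 1, …, m. Its hyperedges are: all 4-element subsets of {s_1, …, s_α} and all 4-element subsets of {t_1, …, t_α}; for each variable x_i the hyperedges {s_1, s_2, x_i, ¬x_i} and {t_1, t_2, x_i, ¬x_i}; and for each clause j of the form a ∨ b ∨ c (a, b, c literals, ¬a denoting the node of the complementary literal of a) the four hyperedges {s_1, z_j, z_j', t_1}, {s_1, ¬a, z_j, ¬b}, {s_1, ¬a, z_j, z_j'} and {s_1, c, z_j, z_j'}. If φ is satisfiable, then there exists a cut S of H(φ) with s_1 ∈ S and t_1 ∉ S such that no hyperedge of H(φ) has split value 2 and at most 2N + 4m hyperedges have split value 1 (all remaining hyperedges having split value 0). -/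

import Mathlib

/-- The split value of a hyperedge `e` with respect to a cut `S`:
`min (|e ∩ S|, |e \ S|)`. -/
def splitVal {W : Type*} [DecidableEq W] (S e : Finset W) : ℕ :=
  min (e ∩ S).card (e \ S).card

/-- A literal over `N` boolean variables: a variable index together with a
polarity (`true` for the positive literal `x_i`, `false` for `¬x_i`). -/
abbrev Lit (N : ℕ) := Fin N × Bool

/-- The complementary literal. -/
def Lit.neg {N : ℕ} (a : Lit N) : Lit N := (a.1, !a.2)

/-- A 3SAT clause: a disjunction of exactly three literals. -/
abbrev Clause (N : ℕ) := Lit N × Lit N × Lit N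

/-- A literal is satisfied by an assignment. -/
def litSat {N : ℕ} (σ : Fin N → Bool) (a : Lit N) : Prop := σ a.1 = a.2

/-- An assignment satisfies a 3SAT instance (a conjunction of `m` clauses). -/
def Satisfies {N m : ℕ} (φ : Fin m → Clause N) (σ : Fin N → Bool) : Prop :=
  ∀ j : Fin m, litSat σ (φ j).1 ∨ litSat σ (φ j).2.1 ∨ litSat σ (φ j).2.2

/-- The vertices of the hypergraph `H(φ)`: the `s`-vertices, the `t`-vertices
(indexed by naturals), one node for each literal, and the nodes `z_j`, `z_j'`
for each clause. -/
abbrev Vtx (N m : ℕ) := ℕ ⊕ ℕ ⊕ (Lit N ⊕ Fin m × Bool)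

/-- The vertex `s_i`. -/
def sV {N m : ℕ} (i : ℕ) : Vtx N m := Sum.inl i

/-- The vertex `t_i`. -/
def tV {N m : ℕ} (i : ℕ) : Vtx N m := Sum.inr (Sum.inl i)

/-- The node of a literal. -/
def litV {N m : ℕ} (a : Lit N) : Vtx N m := Sum.inr (Sum.inr (Sum.inl a))

/-- The node `z_j` of clause `j`. -/
def zV {N m : ℕ} (j : Fin m) : Vtx N m := Sum.inr (Sum.inr (Sum.inr (j, false)))

/-- The node `z_j'` of clause `j`. -/
def zV' {N m : ℕ} (j : Fin m) : Vtx N m := Sum.inr (Sum.inr (Sum.inr (j, true)))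

/-- The two hyperedges `{s_1,s_2,x_i,¬x_i}` and `{t_1,t_2,x_i,¬x_i}` of a variable. -/
def varEdges {N m : ℕ} (i : Fin N) : Multiset (Finset (Vtx N m)) :=
  { {sV 1, sV 2, litV (i, true), litV (i, false)},
    {tV 1, tV 2, litV (i, true), litV (i, false)} }

/-- The four hyperedges `{s_1,z_j,z_j',t_1}`, `{s_1,¬a,z_j,¬b}`, `{s_1,¬a,z_j,z_j'}`
and `{s_1,c,z_j,z_j'}` of the clause `j` of the form `a ∨ b ∨ c`. -/
def clauseEdges {N m : ℕ} (φ : Fin m → Clause N) (j : Fin m) :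
    Multiset (Finset (Vtx N m)) :=
  { {sV 1, zV j, zV' j, tV 1},
    {sV 1, litV (φ j).1.neg, zV j, litV (φ j).2.1.neg},
    {sV 1, litV (φ j).1.neg, zV j, zV' j},
    {sV 1, litV (φ j).2.2, zV j, zV' j} }

/-- The hyperedge family of `H(φ)` (as a multiset): all 4-element subsets of
`{s_1,…,s_α}`, all 4-element subsets of `{t_1,…,t_α}`, the variable hyperedges
and the clause hyperedges. -/
def Hsat {N m : ℕ} (φ : Fin m → Clause N) (α : ℕ) : Multiset (Finset (Vtx N m)) :=
  ((((Finset.Icc 1 α).image (sV : ℕ → Vtx N m)).powersetCard 4).val +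
    (((Finset.Icc 1 α).image (tV : ℕ → Vtx N m)).powersetCard 4).val) +
    (Finset.univ : Finset (Fin N)).val.bind varEdges +
    (Finset.univ : Finset (Fin m)).val.bind (clauseEdges φ)

/-!
Given a satisfying assignment, put on the `s`-side all `s`-vertices, the nodes of the false
literals, and both nodes `z_j, z_j'` of every clause whose first or second literal is true.
Every hyperedge then has all but at most one of its vertices on one side; for a clause whose
first two literals are false, this needs its third literal to be true. The two cliques are not split at all, so only the `2N + 4m` variable and clause
hyperedges can be.
-/

section SplitVal

variable {W : Type*} [DecidableEq W] {S e : Finset W}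

lemma splitVal_eq_zero_of_subset (h : e ⊆ S) : splitVal S e = 0 := by
  simp [splitVal, Finset.sdiff_eq_empty_iff_subset.mpr h]

lemma splitVal_eq_zero_of_disjoint (h : Disjoint e S) : splitVal S e = 0 := by
  simp [splitVal, Finset.disjoint_iff_inter_eq_empty.mp h]

lemma splitVal_le_one_of_forall_mem (x : W) (h : ∀ y ∈ e, y ≠ x → y ∈ S) :
    splitVal S e ≤ 1 := by
  have hsub : e \ S ⊆ {x} := fun y hy => by
    rw [Finset.mem_sdiff] at hy
    exact Finset.mem_singleton.mpr (not_imp_comm.mp (h y hy.1) hy.2)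
  exact (min_le_right _ _).trans ((Finset.card_le_card hsub).trans (Finset.card_singleton x).le)

lemma splitVal_le_one_of_forall_notMem (x : W) (h : ∀ y ∈ e, y ≠ x → y ∉ S) :
    splitVal S e ≤ 1 := by
  have hsub : e ∩ S ⊆ {x} := fun y hy => by
    rw [Finset.mem_inter] at hy
    exact Finset.mem_singleton.mpr (not_imp_not.mp (h y hy.1) hy.2)
  exact (min_le_left _ _).trans ((Finset.card_le_card hsub).trans (Finset.card_singleton x).le)

end SplitVal

instance {N : ℕ} (σ : Fin N → Bool) : DecidablePred (litSat σ) :=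
  fun a => inferInstanceAs (Decidable (σ a.1 = a.2))

lemma litSat_neg_iff {N : ℕ} (σ : Fin N → Bool) (a : Lit N) :
    litSat σ a.neg ↔ ¬ litSat σ a := by
  cases a with
  | mk i b => cases b <;> cases σ i <;> simp [litSat, Lit.neg]

def satCut {N m : ℕ} (φ : Fin m → Clause N) (σ : Fin N → Bool) (α : ℕ) : Finset (Vtx N m) :=
  (Finset.Icc 1 α).image sV ∪ (Finset.univ.filter fun a => ¬ litSat σ a).image litV ∪
    (Finset.univ.filter fun j => litSat σ (φ j).1 ∨ litSat σ (φ j).2.1).biUnion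
      fun j => {zV j, zV' j}

section SatCut

variable {N m : ℕ} (φ : Fin m → Clause N) (σ : Fin N → Bool) (α : ℕ)

@[simp] lemma sV_mem_satCut (i : ℕ) : sV i ∈ satCut φ σ α ↔ 1 ≤ i ∧ i ≤ α := by
  simp [satCut, sV, litV, zV, zV']

@[simp] lemma tV_notMem_satCut (i : ℕ) : tV i ∉ satCut φ σ α := by
  simp [satCut, sV, tV, litV, zV, zV']

@[simp] lemma litV_mem_satCut (a : Lit N) : litV a ∈ satCut φ σ α ↔ ¬ litSat σ a := by
  simp [satCut, sV, litV, zV, zV']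

@[simp] lemma zV_mem_satCut (j : Fin m) :
    zV j ∈ satCut φ σ α ↔ litSat σ (φ j).1 ∨ litSat σ (φ j).2.1 := by
  simp [satCut, sV, litV, zV, zV']

@[simp] lemma zV'_mem_satCut (j : Fin m) :
    zV' j ∈ satCut φ σ α ↔ litSat σ (φ j).1 ∨ litSat σ (φ j).2.1 := by
  simp [satCut, sV, litV, zV, zV']

end SatCut

section SatCutEdges

variable {N m : ℕ} {φ : Fin m → Clause N} {σ : Fin N → Bool} {α : ℕ} {e : Finset (Vtx N m)}

lemma splitVal_satCut_le_one_of_mem_varEdges (hα : 2 ≤ α) {i : Fin N}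
    (he : e ∈ varEdges i) : splitVal (satCut φ σ α) e ≤ 1 := by
  have hα₁ : 1 ≤ α := by omega
  simp only [varEdges, Multiset.insert_eq_cons, Multiset.mem_cons, Multiset.mem_singleton] at he
  rcases he with rfl | rfl
  · refine splitVal_le_one_of_forall_mem (litV (i, σ i)) ?_
    cases h : σ i <;> simp [litSat, h, hα, hα₁]
  · refine splitVal_le_one_of_forall_notMem (litV (i, !σ i)) ?_
    cases h : σ i <;> simp [litSat, h]

lemma splitVal_satCut_le_one_of_mem_clauseEdges (hσ : Satisfies φ σ) (hα : 1 ≤ α) {j : Fin m}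
    (he : e ∈ clauseEdges φ j) : splitVal (satCut φ σ α) e ≤ 1 := by
  have hj := hσ j
  rcases hφ : φ j with ⟨a, b, c⟩
  simp only [hφ] at hj
  simp only [clauseEdges, hφ, Multiset.insert_eq_cons, Multiset.mem_cons,
    Multiset.mem_singleton] at he
  rcases he with rfl | rfl | rfl | rfl
  · by_cases hab : litSat σ a ∨ litSat σ b
    · exact splitVal_le_one_of_forall_mem (tV 1) (by simp [hφ, hab, hα])
    · exact splitVal_le_one_of_forall_notMem (sV 1) (by simp [hφ, hab])
  · by_cases ha : litSat σ a <;> by_cases hb : litSat σ b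
    · exact splitVal_le_one_of_forall_mem (sV 1) (by simp [hφ, litSat_neg_iff, ha, hb])
    · exact splitVal_le_one_of_forall_mem (litV b.neg) (by simp [hφ, litSat_neg_iff, ha, hα])
    · exact splitVal_le_one_of_forall_mem (litV a.neg) (by simp [hφ, litSat_neg_iff, hb, hα])
    · exact splitVal_le_one_of_forall_notMem (sV 1) (by simp [hφ, litSat_neg_iff, ha, hb])
  · by_cases ha : litSat σ a
    · exact splitVal_le_one_of_forall_mem (sV 1) (by simp [hφ, litSat_neg_iff, ha])
    by_cases hb : litSat σ b
    · exact splitVal_le_one_of_forall_mem (litV a.neg) (by simp [hφ, hb, hα])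
    · exact splitVal_le_one_of_forall_notMem (sV 1) (by simp [hφ, litSat_neg_iff, ha, hb])
  · by_cases hab : litSat σ a ∨ litSat σ b
    · exact splitVal_le_one_of_forall_mem (litV c) (by simp [hφ, hab, hα])
    · have hc : litSat σ c := by tauto
      exact splitVal_le_one_of_forall_notMem (sV 1) (by simp [hφ, hab, hc])

end SatCutEdges

section Hsat

variable {N m : ℕ} {φ : Fin m → Clause N} {α : ℕ}

lemma splitVal_eq_zero_of_mem_cliques {S : Finset (Vtx N m)}
    (hs : (Finset.Icc 1 α).image sV ⊆ S) (ht : Disjoint ((Finset.Icc 1 α).image tV) S)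
    {e : Finset (Vtx N m)}
    (he : e ∈ (((Finset.Icc 1 α).image sV).powersetCard 4).val +
      (((Finset.Icc 1 α).image tV).powersetCard 4).val) :
    splitVal S e = 0 := by
  simp only [Multiset.mem_add, Finset.mem_val, Finset.mem_powersetCard] at he
  rcases he with ⟨he, -⟩ | ⟨he, -⟩
  · exact splitVal_eq_zero_of_subset (he.trans hs)
  · exact splitVal_eq_zero_of_disjoint (ht.mono_left he)

lemma countP_splitVal_eq_one_Hsat_le {S : Finset (Vtx N m)}
    (hs : (Finset.Icc 1 α).image sV ⊆ S) (ht : Disjoint ((Finset.Icc 1 α).image tV) S) :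
    (Hsat φ α).countP (fun e => splitVal S e = 1) ≤ 2 * N + 4 * m := by
  have hcliques := Multiset.countP_eq_zero.mpr fun e he =>
    (splitVal_eq_zero_of_mem_cliques hs ht he).trans_ne zero_ne_one
  have hvar : Multiset.card ((Finset.univ : Finset (Fin N)).val.bind (varEdges (m := m))) =
      2 * N := by
    rw [Multiset.card_bind, Finset.sum_map_val]
    simp [varEdges, mul_comm]
  have hclause : Multiset.card ((Finset.univ : Finset (Fin m)).val.bind (clauseEdges φ)) =
      4 * m := by
    rw [Multiset.card_bind, Finset.sum_map_val]
    simp [clauseEdges, mul_comm]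
  rw [Hsat, Multiset.countP_add, Multiset.countP_add, hcliques, zero_add, ← hvar, ← hclause]
  exact add_le_add (Multiset.countP_le_card _ _) (Multiset.countP_le_card _ _)

end Hsat

section SatCutHsat

variable {N m : ℕ} {φ : Fin m → Clause N} {σ : Fin N → Bool} {α : ℕ}

lemma image_sV_subset_satCut : (Finset.Icc 1 α).image sV ⊆ satCut φ σ α :=
  Finset.subset_union_left.trans Finset.subset_union_left

lemma disjoint_image_tV_satCut : Disjoint ((Finset.Icc 1 α).image tV) (satCut φ σ α) :=
  Finset.disjoint_left.mpr fun v hv => by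
    obtain ⟨i, -, rfl⟩ := Finset.mem_image.mp hv
    exact tV_notMem_satCut φ σ α i

lemma splitVal_satCut_le_one (hσ : Satisfies φ σ) (hα : N < α) {e : Finset (Vtx N m)}
    (he : e ∈ Hsat φ α) : splitVal (satCut φ σ α) e ≤ 1 := by
  rw [Hsat, Multiset.mem_add, Multiset.mem_add] at he
  rcases he with (he | he) | he
  · exact (splitVal_eq_zero_of_mem_cliques image_sV_subset_satCut
      disjoint_image_tV_satCut he).trans_le zero_le_one
  · obtain ⟨i, -, he⟩ := Multiset.mem_bind.mp he
    exact splitVal_satCut_le_one_of_mem_varEdges (by have := i.pos; omega) he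
  · obtain ⟨j, -, he⟩ := Multiset.mem_bind.mp he
    exact splitVal_satCut_le_one_of_mem_clauseEdges hσ (by omega) he

end SatCutHsat

theorem stmt14 {N m : ℕ} (φ : Fin m → Clause N)
    (α : ℕ) (hα : α = 2 * N + 4 * m + 1)
    (hsat : ∃ σ : Fin N → Bool, Satisfies φ σ) :
    ∃ S : Finset (Vtx N m), sV 1 ∈ S ∧ tV 1 ∉ S ∧
      (∀ e ∈ Hsat φ α, splitVal S e = 0 ∨ splitVal S e = 1) ∧
      (Hsat φ α).countP (fun e => splitVal S e = 1) ≤ 2 * N + 4 * m := by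
  obtain ⟨σ, hσ⟩ := hsat
  refine ⟨satCut φ σ α, (sV_mem_satCut φ σ α 1).mpr ⟨le_rfl, by omega⟩,
    tV_notMem_satCut φ σ α 1, fun e he => ?_,
    countP_splitVal_eq_one_Hsat_le image_sV_subset_satCut disjoint_image_tV_satCut⟩
  have := splitVal_satCut_le_one hσ (by omega) he
  omega
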